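/- arXiv:2012.03906 — 5 statements merged into one kernel-verified Lean document; each statement's English description precedes it below -/
import Mathlib

section
/- Let α be a real number with 0 < α ≤ 0.6, let b₀ ≥ 1 be an integer, let m be an integer with m ≥ b₀ + 1, and let b_0, b_1, …, b_m be a non-decreasing sequence of positive real numbers with b_0 = b₀. Then ∑_{j=0}^{m−1} (α·(b_{j+1} − b_j) + 1)/b_j − 1/(2·b_{m−1}) ≥ α·(1 + ln(1/α) − ln(b₀) + ln(m)). -/
/-!
Splitting each summand, `∑ α (b_{j+1} - b_j) / b_j` telescopes against `log x ≤ x - 1` to at least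
`α (log b_{m-1} - log b₀)`, while monotonicity gives `∑ 1 / b_j ≥ 1 / b₀ + (m - 1) / b_{m-1}`.
With `B = b_{m-1}` and `c = m - 3/2`, the left side is thus at least
`α log B + c / B - α log b₀ + 1 / b₀`, and minimising over `B` leaves
`α (1 + log (c / α)) - α log b₀ + 1 / b₀`. It remains to see that `1 / b₀` pays for
the replacement of `log c` by `log m`: the logarithmic mean of `m` and `c` exceeds their
geometric mean, so `α (log m - log c) ≤ (3/2) α / √(m c)`, and `(3/2) α b₀ ≤ 0.9 (m - 1) ≤ √(m c)`.
-/

open Real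

/-- The logarithmic mean dominates the geometric mean. -/
lemma log_sub_log_le_div_sqrt_mul {x y : ℝ} (hy : 0 < y) (hyx : y ≤ x) :
    log x - log y ≤ (x - y) / √(x * y) := by
  have hx : 0 < x := hy.trans_le hyx
  set t := √x / √y with ht
  have ht0 : 0 < t := by positivity
  have hlog_t : 0 ≤ log t := log_nonneg <| (one_le_div (by positivity)).2 (sqrt_le_sqrt hyx)
  -- `u ≤ sinh u` for `u = log t ≥ 0`, and `sinh (log t) = (t - t⁻¹) / 2`
  have key : 2 * log t ≤ t - t⁻¹ := by
    have := self_le_sinh_iff.2 hlog_t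
    rw [sinh_log ht0] at this
    linarith
  have hlog : log x - log y = 2 * log t := by
    rw [ht, log_div (by positivity) (by positivity), log_sqrt hx.le, log_sqrt hy.le]
    ring
  have hsub : t - t⁻¹ = (x - y) / √(x * y) := by
    rw [ht, sqrt_mul hx.le, inv_div, div_sub_div _ _ (by positivity) (by positivity),
      ← sq, ← sq, sq_sqrt hx.le, sq_sqrt hy.le, mul_comm √y]
  linarith

lemma log_sub_log_le_sum_div (b : ℕ → ℝ) (n : ℕ) (hpos : ∀ j ≤ n, 0 < b j) :
    log (b n) - log (b 0) ≤ ∑ j ∈ Finset.range n, (b (j + 1) - b j) / b j := by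
  rw [← Finset.sum_range_sub (fun j => log (b j))]
  refine Finset.sum_le_sum fun j hj => ?_
  have hj := Finset.mem_range.1 hj
  have h0 := hpos j hj.le
  have h1 := hpos (j + 1) hj
  calc log (b (j + 1)) - log (b j) = log (b (j + 1) / b j) := (log_div h1.ne' h0.ne').symm
    _ ≤ b (j + 1) / b j - 1 := log_le_sub_one_of_pos (div_pos h1 h0)
    _ = (b (j + 1) - b j) / b j := by field_simp

lemma inv_add_div_le_sum_inv (b : ℕ → ℝ) (n : ℕ) (hpos : ∀ j ≤ n, 0 < b j)
    (hmono : ∀ j < n, b j ≤ b (j + 1)) :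
    1 / b 0 + n / b n ≤ ∑ j ∈ Finset.range (n + 1), 1 / b j := by
  have hmon : MonotoneOn b (Set.Iic n) :=
    monotoneOn_of_le_add_one Set.ordConnected_Iic fun j _ _ hj => hmono j hj
  have hterm : ∀ j ∈ Finset.range n, 1 / b n ≤ 1 / b (j + 1) := fun j hj => by
    have hj : j + 1 ≤ n := Finset.mem_range.1 hj
    exact one_div_le_one_div_of_le (hpos _ hj) (hmon hj (le_refl n) hj)
  have := Finset.card_nsmul_le_sum _ _ _ hterm
  rw [Finset.card_range, nsmul_eq_mul, mul_one_div] at this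
  rw [Finset.sum_range_succ']
  linarith

lemma mul_log_sub_log_add_inv_add_div_le_sum {α : ℝ} (hα : 0 ≤ α) (b : ℕ → ℝ) (n : ℕ)
    (hpos : ∀ j ≤ n + 1, 0 < b j) (hmono : ∀ j < n + 1, b j ≤ b (j + 1)) :
    α * (log (b n) - log (b 0)) + 1 / b 0 + n / b n ≤
      ∑ j ∈ Finset.range (n + 1), (α * (b (j + 1) - b j) + 1) / b j := by
  have hlog := log_sub_log_le_sum_div b (n + 1) hpos
  have hlog_mono : log (b n) ≤ log (b (n + 1)) :=
    log_le_log (hpos n n.le_succ) (hmono n n.lt_succ_self)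
  have hinv := inv_add_div_le_sum_inv b n (fun j hj => hpos j (by omega))
    fun j hj => hmono j (by omega)
  have hsplit : ∑ j ∈ Finset.range (n + 1), (α * (b (j + 1) - b j) + 1) / b j =
      α * ∑ j ∈ Finset.range (n + 1), (b (j + 1) - b j) / b j +
        ∑ j ∈ Finset.range (n + 1), 1 / b j := by
    rw [Finset.mul_sum, ← Finset.sum_add_distrib]
    exact Finset.sum_congr rfl fun j _ => by ring
  rw [hsplit]
  nlinarith [mul_le_mul_of_nonneg_left hlog hα, mul_le_mul_of_nonneg_left hlog_mono hα]

/-- `a * log B + c / B` is minimised over `B > 0` at `B = c / a`. -/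
lemma mul_one_add_log_div_le {a c B : ℝ} (ha : 0 < a) (hc : 0 < c) (hB : 0 < B) :
    a * (1 + log (c / a)) ≤ a * log B + c / B := by
  have h := log_le_sub_one_of_pos (show 0 < c / (a * B) by positivity)
  rw [div_mul_eq_div_div, log_div (by positivity) hB.ne'] at h
  have h' := mul_le_mul_of_nonneg_left h ha.le
  have e : a * (c / a / B - 1) = c / B - a := by field_simp
  linarith

lemma mul_log_sub_log_le_inv {α b₀ m : ℝ} (hα0 : 0 ≤ α) (hα : α ≤ 3 / 5) (hb₀ : 1 ≤ b₀)
    (hm : b₀ + 1 ≤ m) :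
    α * (log m - log (m - 3 / 2)) ≤ 1 / b₀ := by
  have hc : 0 < m - 3 / 2 := by linarith
  have hb₀0 : 0 ≤ b₀ := by linarith
  have hsqrt : 3 / 2 * α * b₀ ≤ √(m * (m - 3 / 2)) := by
    have h : 3 / 2 * α * b₀ ≤ 9 / 10 * (m - 1) := by
      nlinarith [mul_le_mul_of_nonneg_right hα hb₀0]
    apply le_sqrt_of_sq_le
    nlinarith [mul_nonneg hα0 hb₀0]
  calc α * (log m - log (m - 3 / 2)) ≤ α * ((m - (m - 3 / 2)) / √(m * (m - 3 / 2))) :=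
        mul_le_mul_of_nonneg_left (log_sub_log_le_div_sqrt_mul hc (by linarith)) hα0
    _ = 3 / 2 * α / √(m * (m - 3 / 2)) := by ring
    _ ≤ 1 / b₀ := by
        rw [div_le_div_iff₀ (sqrt_pos.2 (mul_pos (by linarith) hc)) (by linarith)]
        linarith

theorem stmt_1 (α : ℝ) (hα0 : 0 < α) (hα : α ≤ 0.6)
    (b₀ m : ℕ) (hb₀ : 1 ≤ b₀) (hm : b₀ + 1 ≤ m)
    (b : ℕ → ℝ) (hpos : ∀ j ≤ m, 0 < b j) (hmono : ∀ j < m, b j ≤ b (j + 1))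
    (hb0 : b 0 = (b₀ : ℝ)) :
    ∑ j ∈ Finset.range m, (α * (b (j + 1) - b j) + 1) / b j - 1 / (2 * b (m - 1)) ≥
      α * (1 + Real.log (1 / α) - Real.log (b₀ : ℝ) + Real.log (m : ℝ)) := by
  obtain ⟨n, rfl⟩ : ∃ n, m = n + 1 := ⟨m - 1, by omega⟩
  have hb₀R : (1 : ℝ) ≤ b₀ := by exact_mod_cast hb₀
  have hmR : (b₀ : ℝ) + 1 ≤ n + 1 := by exact_mod_cast hm
  have hB : 0 < b n := hpos n n.le_succ
  set c : ℝ := (n + 1 : ℝ) - 3 / 2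
  have hc : 0 < c := by simp only [c]; linarith
  have hsum := mul_log_sub_log_add_inv_add_div_le_sum hα0.le b n hpos hmono
  have hmin := mul_one_add_log_div_le hα0 hc hB
  have hend := mul_log_sub_log_le_inv hα0.le
    (by linarith [show (0.6 : ℝ) = 3 / 5 by norm_num]) hb₀R hmR
  rw [Nat.add_sub_cancel, ge_iff_le]
  push_cast
  calc α * (1 + log (1 / α) - log b₀ + log (n + 1))
      = α * (1 + log (c / α)) - α * log b₀ + α * (log (n + 1) - log c) := by
        rw [one_div α, log_inv, log_div hc.ne' hα0.ne']; ring
    _ ≤ α * log (b n) + c / b n - α * log b₀ + 1 / b₀ := by linarith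
    _ = α * (log (b n) - log (b 0)) + 1 / b 0 + n / b n - 1 / (2 * b n) := by
        rw [hb0]; field_simp; ring
    _ ≤ _ := by gcongr
end

section
/- Let α = 0.57635 and β = α²/(8·(1 − α)). Then for every real number x > 0, it holds that (1 − α − β)/x + α·(1 + 1/x)·ln(1 + x) + α·ln(1/α) ≥ 1.41478. -/
open Real

theorem stmt_7 (α β : ℝ) (hα : α = 0.57635) (hβ : β = α ^ 2 / (8 * (1 - α))) :
    ∀ x : ℝ, 0 < x →
      (1 - α - β) / x + α * (1 + 1 / x) * Real.log (1 + x) + α * Real.log (1 / α) ≥ 1.41478 := by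
  subst hβ hα
  intro x hx
  have hx1 : (0:ℝ) < 1 + x := by linarith
  -- upper bound on exp(26208/57635)
  have hw : Real.exp ((26208:ℝ)/57635) ≤ 1.5757379343 := by
    have h := Real.exp_bound' (x := (26208:ℝ)/57635) (by norm_num) (by norm_num)
      (n := 10) (by norm_num)
    refine h.trans ?_
    rw [Finset.sum_range_succ, Finset.sum_range_succ, Finset.sum_range_succ,
      Finset.sum_range_succ, Finset.sum_range_succ, Finset.sum_range_succ,
      Finset.sum_range_succ, Finset.sum_range_succ, Finset.sum_range_succ,
      Finset.sum_range_succ, Finset.sum_range_zero]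
    norm_num [Nat.factorial]
  -- upper bound on exp(83843/57635)
  have hE : Real.exp ((83843:ℝ)/57635) ≤ 4.2832998 := by
    have h1 : ((83843:ℝ)/57635) = 1 + 26208/57635 := by norm_num
    rw [h1, Real.exp_add]
    nlinarith [Real.exp_one_lt_d9, Real.exp_pos ((26208:ℝ)/57635),
      Real.exp_pos (1:ℝ), hw]
  -- lower bound on exp(0.551041)
  have hq : (1.7350568232:ℝ) ≤ Real.exp 0.551041 := by
    have h := Real.sum_le_exp_of_nonneg (x := (0.551041:ℝ)) (by norm_num) 10
    refine le_trans ?_ h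
    rw [Finset.sum_range_succ, Finset.sum_range_succ, Finset.sum_range_succ,
      Finset.sum_range_succ, Finset.sum_range_succ, Finset.sum_range_succ,
      Finset.sum_range_succ, Finset.sum_range_succ, Finset.sum_range_succ,
      Finset.sum_range_succ, Finset.sum_range_zero]
    norm_num [Nat.factorial]
  -- lower bound on log 0.57635
  have hM : (-0.551041 : ℝ) ≤ Real.log 0.57635 := by
    rw [Real.le_log_iff_exp_le (by norm_num : (0:ℝ) < 0.57635)]
    have hmul : Real.exp (-0.551041) * Real.exp 0.551041 = 1 := by
      rw [← Real.exp_add]; norm_num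
    nlinarith [Real.exp_pos (-0.551041:ℝ), hq, hmul]
  -- tangent line inequality for u * log u at u = (1+x)/0.57635
  have htan := Real.add_one_le_exp ((83843:ℝ)/57635
    - (Real.log (1+x) - Real.log 0.57635))
  have hexp_eq : Real.exp ((83843:ℝ)/57635 - (Real.log (1+x) - Real.log 0.57635))
      = Real.exp ((83843:ℝ)/57635) * 0.57635 / (1+x) := by
    rw [sub_sub_eq_add_sub, Real.exp_sub, Real.exp_add, Real.exp_log hx1,
      Real.exp_log (by norm_num : (0:ℝ) < 0.57635)]
  rw [hexp_eq] at htan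
  have hmulu := mul_le_mul_of_nonneg_left htan hx1.le
  have hdiv : (1+x) * (Real.exp ((83843:ℝ)/57635) * 0.57635 / (1+x))
      = Real.exp ((83843:ℝ)/57635) * 0.57635 := by
    field_simp
  rw [hdiv] at hmulu
  -- key inequality (division-free form)
  have key : 1.41478 * (1 + x) - 0.57635 ^ 2 * Real.exp ((83843:ℝ)/57635)
      ≤ 0.57635 * (1 + x) * (Real.log (1+x) - Real.log 0.57635) := by
    nlinarith [hmulu]
  have hlog1 : Real.log (1/(0.57635:ℝ)) = -Real.log 0.57635 := by
    rw [one_div, Real.log_inv]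
  rw [hlog1]
  have hc : (0.57635:ℝ) ^ 2 / (8 * (1 - 0.57635)) = 132871729 / 1355680000 := by
    norm_num
  rw [hc]
  -- main polynomial inequality after clearing denominators
  have main : 1.41478 * x ≤ (1 - 0.57635 - 132871729 / 1355680000)
      + 0.57635 * (1+x) * Real.log (1+x) - 0.57635 * x * Real.log 0.57635 := by
    nlinarith [key, hE, hM, hx]
  have expand : (1 - 0.57635 - (132871729:ℝ) / 1355680000) / x
      + 0.57635 * (1 + 1 / x) * Real.log (1 + x) + 0.57635 * -Real.log 0.57635
      - 1.41478
      = ((1 - 0.57635 - 132871729 / 1355680000)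
        + 0.57635 * (1+x) * Real.log (1+x) - 0.57635 * x * Real.log 0.57635
        - 1.41478 * x) / x := by
    field_simp
    ring
  have h0 : (0:ℝ) ≤ ((1 - 0.57635 - (132871729:ℝ) / 1355680000)
      + 0.57635 * (1+x) * Real.log (1+x) - 0.57635 * x * Real.log 0.57635
      - 1.41478 * x) / x := div_nonneg (by linarith) hx.le
  rw [ge_iff_le, ← sub_nonneg]
  linarith [h0, expand.ge, expand.le]
end

section
/- Let α = 0.57635 and β = α²/(8·(1 − α)). Then for all real numbers b ≥ 1 and e > 0, it holds that (1 − α − β)·b + α·(e + b)·ln(1 + e/b) + α·e·ln(1/α) ≥ 1.41478·e. -/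
open Real

private lemma my_log_lb {L q : ℝ} (hL0 : 0 ≤ L) (hL1 : L ≤ 1) (hq : 0 < q)
    (h : (∑ m ∈ Finset.range 13, L ^ m / m.factorial) +
      L ^ 13 * (13 + 1) / (Nat.factorial 13 * 13) ≤ q) :
    L ≤ Real.log q := by
  rw [Real.le_log_iff_exp_le hq]
  exact (Real.exp_bound' hL0 hL1 (by norm_num)).trans h

private lemma my_log_ub {U q : ℝ} (hL0 : 0 ≤ U) (hL1 : U ≤ 1) (hq : 0 < q)
    (h : q ≤ (∑ m ∈ Finset.range 13, U ^ m / m.factorial) -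
      U ^ 13 * ((13 + 1) / (Nat.factorial 13 * 13))) :
    Real.log q ≤ U := by
  rw [Real.log_le_iff_le_exp hq]
  have hb := Real.exp_bound (x := U) (by rw [abs_of_nonneg hL0]; exact hL1) (n := 13) (by norm_num)
  rw [abs_of_nonneg hL0] at hb
  have h2 := (abs_sub_le_iff.mp hb).2
  push_cast at h2 ⊢
  linarith

private lemma La_lb : (0.55104016 : ℝ) ≤ Real.log (20000 / 11527) := by
  apply my_log_lb (by norm_num) (by norm_num) (by norm_num)
  simp only [Finset.sum_range_succ, Finset.sum_range_zero]
  norm_num [Nat.factorial]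

private lemma La_ub : Real.log (20000 / 11527) ≤ (0.55104018 : ℝ) := by
  apply my_log_ub (by norm_num) (by norm_num) (by norm_num)
  simp only [Finset.sum_range_succ, Finset.sum_range_zero]
  norm_num [Nat.factorial]

private lemma L1_lb : (0.90247574 : ℝ) ≤ Real.log (24657 / 10000) := by
  apply my_log_lb (by norm_num) (by norm_num) (by norm_num)
  simp only [Finset.sum_range_succ, Finset.sum_range_zero]
  norm_num [Nat.factorial]

private lemma L1_ub : Real.log (24657 / 10000) ≤ (0.90247576 : ℝ) := by
  apply my_log_ub (by norm_num) (by norm_num) (by norm_num)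
  simp only [Finset.sum_range_succ, Finset.sum_range_zero]
  norm_num [Nat.factorial]

private lemma L2_lb : (0.90490617 : ℝ) ≤ Real.log (24717 / 10000) := by
  apply my_log_lb (by norm_num) (by norm_num) (by norm_num)
  simp only [Finset.sum_range_succ, Finset.sum_range_zero]
  norm_num [Nat.factorial]

private lemma my_tangent {r x : ℝ} (hr : 0 < r) (hx : 0 < x) :
    x * Real.log r + x - r ≤ x * Real.log x := by
  have h := Real.log_le_sub_one_of_pos (show 0 < r / x by positivity)
  rw [Real.log_div hr.ne' hx.ne'] at h
  have h2 := mul_le_mul_of_nonneg_left h hx.le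
  have h3 : x * (r / x - 1) = r - x := by field_simp
  nlinarith [h2, h3]

private lemma key_ineq (t : ℝ) (ht : 0 < t) :
    0 ≤ (1 - 0.57635 - 0.57635 ^ 2 / (8 * (1 - 0.57635)))
      + 0.57635 * ((1 + t) * Real.log (1 + t))
      + (0.57635 * Real.log (20000 / 11527) - 1.41478) * t := by
  have hx : (0 : ℝ) < 1 + t := by linarith
  rcases le_total t (14687 / 10000) with hm | hm
  · have htan := my_tangent (r := 24657 / 10000) (by norm_num) hx
    have hS : 0.57635 * Real.log (24657 / 10000) + 0.57635
        + (0.57635 * Real.log (20000 / 11527) - 1.41478) ≤ 0 := by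
      have := L1_ub; have := La_ub; linarith
    have hprod : 0 ≤ (14687 / 10000 - t) *
        -(0.57635 * Real.log (24657 / 10000) + 0.57635
          + (0.57635 * Real.log (20000 / 11527) - 1.41478)) :=
      mul_nonneg (by linarith) (by linarith)
    have hL1 := L1_lb
    have hLa := La_lb
    nlinarith [htan, hprod, hL1, hLa]
  · have htan := my_tangent (r := 24717 / 10000) (by norm_num) hx
    have hS : 0 ≤ 0.57635 * Real.log (24717 / 10000) + 0.57635
        + (0.57635 * Real.log (20000 / 11527) - 1.41478) := by
      have := L2_lb; have := La_lb; linarith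
    have hprod : 0 ≤ (t - 14687 / 10000) *
        (0.57635 * Real.log (24717 / 10000) + 0.57635
          + (0.57635 * Real.log (20000 / 11527) - 1.41478)) :=
      mul_nonneg (by linarith) hS
    have hL2 := L2_lb
    have hLa := La_lb
    nlinarith [htan, hprod, hL2, hLa]

theorem stmt_8 (α β : ℝ) (hα : α = 0.57635) (hβ : β = α ^ 2 / (8 * (1 - α)))
    (b e : ℝ) (hb : 1 ≤ b) (he : 0 < e) :
    (1 - α - β) * b + α * (e + b) * Real.log (1 + e / b) + α * e * Real.log (1 / α) ≥
      1.41478 * e := by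
  subst hβ hα
  have hb0 : (0 : ℝ) < b := by linarith
  obtain ⟨t, ht, rfl⟩ : ∃ t, 0 < t ∧ e = t * b :=
    ⟨e / b, div_pos he hb0, (div_mul_cancel₀ e hb0.ne').symm⟩
  have hdiv : t * b / b = t := by field_simp
  have hq : (1 : ℝ) / 0.57635 = 20000 / 11527 := by norm_num
  rw [hdiv, hq]
  have hk := key_ineq t ht
  have hbk := mul_nonneg hb0.le hk
  nlinarith [hbk]
end

section
/- Let α and β be real numbers with 0 < α, 0 ≤ β, and α + β < 1, and define f(x) = (1 − α − β)/x + α·(1 + 1/x)·ln(1 + x) for x > 0. If x* > 0 satisfies x* − ln(1 + x*) = (1 − α − β)/α, then for every y > 0 it holds that f(y) ≥ f(x*). -/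
open Real

/- At a critical point `xs` the constant is `c = α (xs - log (1 + xs))`, so the objective there equals
`α (1 + log (1 + xs))`. Multiplying `f y ≥ α (1 + log (1 + xs))` by `y > 0` reduces it to
`(1 + y) (log (1 + xs) - log (1 + y)) ≤ xs - y`, which is `log t ≤ t - 1` at `t = (1 + xs) / (1 + y)`. -/

namespace Real

theorem log_sub_log_le_div {a b : ℝ} (ha : 0 < a) (hb : 0 < b) : log a - log b ≤ (a - b) / b := by
  have h := log_le_sub_one_of_pos (div_pos ha hb)
  rwa [log_div ha.ne' hb.ne', div_sub_one hb.ne'] at h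

end Real

/-- The function minimized in the proof of Lemma 6.4, with `c = 1 - α - β`. -/
noncomputable def criticalObjective (c α x : ℝ) : ℝ :=
  c / x + α * (1 + 1 / x) * log (1 + x)

theorem criticalObjective_of_crit {c α xs : ℝ} (hxs : xs ≠ 0)
    (hc : c = α * (xs - log (1 + xs))) :
    criticalObjective c α xs = α * (1 + log (1 + xs)) := by
  rw [criticalObjective, hc]
  field_simp
  ring

theorem criticalObjective_ge_of_crit {c α xs y : ℝ} (hα : 0 ≤ α) (hxs₁ : -1 < xs) (hxs₀ : xs ≠ 0)
    (hy : 0 < y) (hc : c = α * (xs - log (1 + xs))) :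
    criticalObjective c α xs ≤ criticalObjective c α y := by
  have hlog : (1 + y) * (log (1 + xs) - log (1 + y)) ≤ xs - y := by
    have h := log_sub_log_le_div (a := 1 + xs) (b := 1 + y) (by linarith) (by linarith)
    rw [le_div_iff₀ (by linarith)] at h
    linarith
  have hdiff : criticalObjective c α y - α * (1 + log (1 + xs)) =
      α / y * ((xs - y) - (1 + y) * (log (1 + xs) - log (1 + y))) := by
    rw [criticalObjective, hc]
    field_simp
    ring
  rw [criticalObjective_of_crit hxs₀ hc, ← sub_nonneg, hdiff]
  exact mul_nonneg (div_nonneg hα hy.le) (sub_nonneg.mpr hlog)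

theorem stmt_9_general (α β xs : ℝ) (hα : 0 < α)
    (hxs : 0 < xs) (hcrit : xs - Real.log (1 + xs) = (1 - α - β) / α) :
    ∀ y : ℝ, 0 < y →
      (1 - α - β) / y + α * (1 + 1 / y) * Real.log (1 + y) ≥
        (1 - α - β) / xs + α * (1 + 1 / xs) * Real.log (1 + xs) := by
  intro y hy
  have hc : 1 - α - β = α * (xs - log (1 + xs)) := by
    rw [hcrit, mul_div_cancel₀ _ hα.ne']
  exact criticalObjective_ge_of_crit hα.le (by linarith) hxs.ne' hy hc

theorem stmt_9 (α β xs : ℝ) (hα : 0 < α) (hβ : 0 ≤ β) (hαβ : α + β < 1)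
    (hxs : 0 < xs) (hcrit : xs - Real.log (1 + xs) = (1 - α - β) / α) :
    ∀ y : ℝ, 0 < y →
      (1 - α - β) / y + α * (1 + 1 / y) * Real.log (1 + y) ≥
        (1 - α - β) / xs + α * (1 + 1 / xs) * Real.log (1 + xs) :=
  stmt_9_general α β xs hα hxs hcrit
end

section
/- Let α be a real number with 0 < α ≤ 8/9, let β = α²/(8·(1 − α)), and let c, s, o, g, h be real numbers with c > 0, s − 1 ≥ 2·c, o ≥ 0, g ≥ 0, h ≥ 0, and 2·β·(s − 1)·o ≤ g·(2·α·c − g − 2·h). Then 2·β·(s − 1)·o + g² + 2·g·h ≥ α·g·(o + g + h). -/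
private lemma stmt_17_aux (α X c o g h : ℝ) (hα0 : 0 < α) (h1α : 0 < 1 - α)
    (ho : 0 ≤ o) (hh : 0 ≤ h) (hg' : 0 < g) (hXpos : 0 < X)
    (hXo : X * o ≤ g * (2 * α * c - g - 2 * h))
    (hXQ : X * (2 * c - g - h) ≥ g * (2 * α * c - g - 2 * h)) :
    X * o + g ^ 2 + 2 * g * h ≥ α * g * (o + g + h) := by
  rcases le_or_gt (α * g) X with hcase | hcase
  · nlinarith [mul_nonneg ho (by linarith : (0:ℝ) ≤ X - α * g),
      mul_nonneg (mul_nonneg h1α.le hg'.le) hg'.le,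
      mul_nonneg (mul_nonneg h1α.le hg'.le) hh]
  · have hprod : 0 ≤ (α * g - X) * (g * (2 * α * c - g - 2 * h) - X * o) :=
      mul_nonneg (by linarith) (by linarith)
    have hgkey : 0 ≤ g * (X * (2 * c - g - h) - g * (2 * α * c - g - 2 * h)) :=
      mul_nonneg hg'.le (by linarith)
    nlinarith [hprod, mul_nonneg hα0.le hgkey, hXpos]

theorem stmt_17 (α β c s o g h : ℝ) (hα0 : 0 < α) (hα : α ≤ 8 / 9)
    (hβ : β = α ^ 2 / (8 * (1 - α))) (hc : 0 < c) (hs : s - 1 ≥ 2 * c)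
    (ho : 0 ≤ o) (hg : 0 ≤ g) (hh : 0 ≤ h)
    (hobound : 2 * β * (s - 1) * o ≤ g * (2 * α * c - g - 2 * h)) :
    2 * β * (s - 1) * o + g ^ 2 + 2 * g * h ≥ α * g * (o + g + h) := by
  have h1α : (0:ℝ) < 1 - α := by linarith
  have hβpos : 0 < β := by rw [hβ]; positivity
  have hs1 : 0 < s - 1 := by linarith
  have hPnn : 0 ≤ 2 * β * (s - 1) * o := by positivity
  have hgA : 0 ≤ g * (2 * α * c - g - 2 * h) := le_trans hPnn hobound
  rcases hg.lt_or_eq with hg' | hg'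
  · -- g > 0
    have hA : 0 ≤ 2 * α * c - g - 2 * h := by nlinarith
    have h2c : 0 ≤ 2 * c - g - h := by nlinarith
    -- key quadratic inequality
    have hQ : α ^ 2 * c * (2 * c - g - h) ≥ 2 * (1 - α) * g * (2 * α * c - g - 2 * h) := by
      rcases le_or_gt (α ^ 2 * c) (4 * (1 - α) * g) with hD | hD
      · nlinarith [sq_nonneg (4 * (1 - α) * g - α * (4 - 3 * α) * c),
          mul_nonneg (mul_nonneg (mul_nonneg hα0.le hα0.le) hα0.le)
            (mul_nonneg (by linarith : (0:ℝ) ≤ 8 - 9 * α) (mul_nonneg hc.le hc.le)),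
          mul_nonneg (mul_nonneg h1α.le hh) (by linarith : (0:ℝ) ≤ 4 * (1 - α) * g - α ^ 2 * c)]
      · have t1 : 0 ≤ (2 * α * c - g - 2 * h) / 2 * (α ^ 2 * c - 4 * (1 - α) * g) :=
          mul_nonneg (by linarith) (by linarith)
        have hacn : 0 ≤ α ^ 2 * c := by positivity
        have t2 : 0 ≤ α ^ 2 * c * (2 * α * c - g - 2 * h) := mul_nonneg hacn hA
        have t3 : 0 ≤ α ^ 2 * c * h := mul_nonneg hacn hh
        have t4 : 0 ≤ α ^ 2 * (1 - α) * c ^ 2 := by positivity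
        nlinarith [t1, t2, t3, t4]
    -- convert to β form
    have hQβ : 4 * β * c * (2 * c - g - h) ≥ g * (2 * α * c - g - 2 * h) := by
      have he : 4 * β * c * (2 * c - g - h) = α ^ 2 * c * (2 * c - g - h) / (2 * (1 - α)) := by
        rw [hβ]; field_simp; ring
      rw [he, ge_iff_le, le_div_iff₀ (by linarith : (0:ℝ) < 2 * (1 - α))]
      nlinarith [hQ]
    have hXQ : 2 * β * (s - 1) * (2 * c - g - h) ≥ g * (2 * α * c - g - 2 * h) := by
      nlinarith [mul_nonneg (by nlinarith : (0:ℝ) ≤ 2 * β * (s - 1) - 4 * β * c) h2c]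
    have hXpos : 0 < 2 * β * (s - 1) := by positivity
    exact stmt_17_aux α (2 * β * (s - 1)) c o g h hα0 h1α ho hh hg' hXpos hobound hXQ
  · -- g = 0
    subst hg'
    nlinarith
end
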